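/- arXiv:2201.07084 — 3 statements merged into one kernel-verified Lean document; each statement's English description precedes it below -/
import Mathlib

section
/- The determinant of a real antisymmetric matrix is a perfect square (namely the square of its Pfaffian); in particular, the determinant of a real antisymmetric matrix is nonnegative. -/
open Matrix Polynomial Filter

lemma charpoly_eval_aux {n : ℕ} (M : Matrix (Fin n) (Fin n) ℝ) (r : ℝ) :
    M.charpoly.eval r = (r • (1 : Matrix (Fin n) (Fin n) ℝ) - M).det := by
  rw [Matrix.charpoly, eval_det, matPolyEquiv_charmatrix]
  simp only [eval_sub, eval_X, eval_C, Matrix.scalar_apply, ← Matrix.diagonal_one,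
    ← Matrix.diagonal_smul]
  norm_num [Pi.smul_def]

lemma det_smul_one_add_ne_zero {n : ℕ} (A : Matrix (Fin n) (Fin n) ℝ) (hA : Aᵀ = -A)
    {t : ℝ} (ht : 0 < t) : (t • (1 : Matrix (Fin n) (Fin n) ℝ) + A).det ≠ 0 := by
  intro h0
  obtain ⟨v, hv, hmv⟩ := (Matrix.exists_mulVec_eq_zero_iff).mpr h0
  have h1 : v ⬝ᵥ ((t • (1 : Matrix (Fin n) (Fin n) ℝ) + A) *ᵥ v) = 0 := by
    rw [hmv, dotProduct_zero]
  have hskew : v ⬝ᵥ (A *ᵥ v) = 0 := by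
    have h2 : v ⬝ᵥ (A *ᵥ v) = -(v ⬝ᵥ (A *ᵥ v)) := by
      calc v ⬝ᵥ (A *ᵥ v) = (v ᵥ* A) ⬝ᵥ v := by rw [Matrix.dotProduct_mulVec]
        _ = (Aᵀ *ᵥ v) ⬝ᵥ v := by rw [← Matrix.vecMul_transpose, Matrix.transpose_transpose]
        _ = -((A *ᵥ v) ⬝ᵥ v) := by rw [hA, Matrix.neg_mulVec, neg_dotProduct]
        _ = -(v ⬝ᵥ (A *ᵥ v)) := by rw [dotProduct_comm]
    linarith
  rw [Matrix.add_mulVec, Matrix.smul_mulVec, Matrix.one_mulVec, dotProduct_add,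
    dotProduct_smul, hskew, add_zero, smul_eq_mul] at h1
  have hvv : v ⬝ᵥ v ≠ 0 := fun h => hv (dotProduct_self_eq_zero.mp h)
  rcases mul_eq_zero.mp h1 with h | h
  · exact absurd h ht.ne'
  · exact hvv h

/-- The determinant of a real antisymmetric matrix is a perfect square; in particular it is
nonnegative. -/
theorem det_skew_sq (n : ℕ) (A : Matrix (Fin n) (Fin n) ℝ) (hA : Aᵀ = -A) :
    (∃ p : ℝ, A.det = p ^ 2) ∧ 0 ≤ A.det := by
  have hdet : 0 ≤ A.det := by
    rcases Nat.eq_zero_or_pos n with hn | hn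
    · subst hn
      simp [Matrix.det_fin_zero]
    · -- P is the characteristic polynomial of -A
      set P : ℝ[X] := (-A).charpoly with hP
      have hPeval : ∀ t : ℝ, P.eval t = (t • (1 : Matrix (Fin n) (Fin n) ℝ) + A).det := by
        intro t
        rw [hP, charpoly_eval_aux, sub_neg_eq_add]
      have hmonic : P.Monic := Matrix.charpoly_monic _
      have hdeg : 0 < P.degree := by
        rw [hP, Matrix.charpoly_degree_eq_dim]
        simpa using hn
      have htop : Tendsto (fun x => P.eval x) atTop atTop :=
        P.tendsto_atTop_of_leadingCoeff_nonneg hdeg (by rw [hmonic.leadingCoeff]; norm_num)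
      -- P.eval t > 0 for all t > 0
      have hpos : ∀ t : ℝ, 0 < t → 0 < P.eval t := by
        intro t ht
        obtain ⟨b, hb⟩ := (htop.eventually_ge_atTop 1).exists_forall_of_atTop
        set x := max b (t + 1) with hx
        have hxt : t ≤ x := le_trans (by linarith) (le_max_right _ _)
        have hPx : 1 ≤ P.eval x := hb x (le_max_left _ _)
        by_contra hle
        push_neg at hle
        have hPt : P.eval t < 0 := lt_of_le_of_ne hle (by
          rw [hPeval]; exact det_smul_one_add_ne_zero A hA ht)
        have : (0 : ℝ) ∈ Set.Icc (P.eval t) (P.eval x) := ⟨hPt.le, by linarith⟩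
        obtain ⟨s, hs, hs0⟩ := intermediate_value_Icc hxt (P.continuous_aeval.continuousOn) this
        have hspos : 0 < s := lt_of_lt_of_le ht hs.1
        have : P.eval s ≠ 0 := by
          rw [hPeval]; exact det_smul_one_add_ne_zero A hA hspos
        exact this (by simpa using hs0)
      -- take the limit t → 0⁺
      have hcont : Continuous (fun t : ℝ => P.eval t) := P.continuous_aeval
      have hlim : Tendsto (fun t : ℝ => P.eval t) (nhdsWithin 0 (Set.Ioi 0)) (nhds (P.eval 0)) :=
        (hcont.tendsto 0).mono_left nhdsWithin_le_nhds
      have h0 : 0 ≤ P.eval 0 :=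
        ge_of_tendsto hlim (eventually_nhdsWithin_of_forall fun t ht => (hpos t ht).le)
      rw [hPeval 0, zero_smul, zero_add] at h0
      exact h0
  exact ⟨⟨Real.sqrt A.det, (Real.sq_sqrt hdet).symm⟩, hdet⟩
end

section
/- The characteristic polynomial of antisymmetric matrices satisfies the 4-term relation: for any real antisymmetric n×n matrix A (n ≥ 2), χ_A − χ_{A'} = χ_{Ã} − χ_{Ã'}, where A' is obtained from A by setting entries (1,2) and (2,1) to zero, Ã = BᵀAB with B the matrix equal to the identity except B_{1,2} = 1, and Ã' is obtained from Ã by setting entries (1,2) and (2,1) to zero. -/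
open Matrix

/-- `prime M` is `M` with the `(1,2)` and `(2,1)` entries (indexed `0`,`1`) replaced by `0`. -/
def primeAt {n : ℕ} (M : Matrix (Fin (n + 2)) (Fin (n + 2)) ℝ) :
    Matrix (Fin (n + 2)) (Fin (n + 2)) ℝ :=
  Matrix.of fun i j => if (i = 0 ∧ j = 1) ∨ (i = 1 ∧ j = 0) then 0 else M i j

namespace FourTermAux

open Polynomial

variable {n : ℕ}

local notation "SB" => Matrix.single

lemma h01' : (0 : Fin (n+2)) ≠ 1 := by simp [Fin.ext_iff]
lemma h10' : (1 : Fin (n+2)) ≠ 0 := by simp [Fin.ext_iff]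

noncomputable def TT (n : ℕ) : Matrix (Fin (n+2)) (Fin (n+2)) ℝ[X] :=
  SB 0 1 X + SB 1 0 X - SB 1 1 X

lemma scalarX : Matrix.scalar (Fin (n+2)) (X:ℝ[X]) = (X:ℝ[X]) • 1 := by
  rw [Matrix.scalar_apply]; ext i j
  simp [Matrix.diagonal_apply, Matrix.one_apply, apply_ite (fun t : ℝ[X] => (X:ℝ[X]) * t)]

lemma key_alg :
    (1 + SB (1 : Fin (n+2)) (0 : Fin (n+2)) (1:ℝ[X])) *
      (Matrix.scalar (Fin (n+2)) (X:ℝ[X]) - TT n) * (1 + SB 0 1 (1:ℝ[X]))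
      = Matrix.scalar (Fin (n+2)) (X:ℝ[X]) := by
  rw [scalarX, TT]
  simp [mul_add, add_mul, mul_sub, sub_mul, mul_one, one_mul, smul_mul_assoc,
    mul_smul_comm,
    Matrix.single_mul_single_same, Matrix.single_mul_single_of_ne, h01', h10',
    Matrix.smul_single, smul_eq_mul, mul_one, one_mul, smul_zero, zero_mul, mul_zero]
  abel

lemma transB : (1 + SB (0 : Fin (n+2)) (1 : Fin (n+2)) (1:ℝ))ᵀ
    = 1 + SB (1 : Fin (n+2)) (0 : Fin (n+2)) (1:ℝ) := by
  ext i j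
  simp [Matrix.transpose_apply, Matrix.add_apply, Matrix.one_apply, Matrix.single,
    and_comm, eq_comm]

lemma conjB (M : Matrix (Fin (n+2)) (Fin (n+2)) ℝ) :
    ((1 + SB (0 : Fin (n+2)) (1 : Fin (n+2)) (1:ℝ))ᵀ * M *
      (1 + SB (0 : Fin (n+2)) (1 : Fin (n+2)) (1:ℝ))).charpoly
      = (charmatrix M - TT n).det := by
  have mapSB : ∀ (i j : Fin (n+2)) (c : ℝ),
      (SB i j c).map (Polynomial.C : ℝ → ℝ[X]) = SB i j (Polynomial.C c) := by
    intro i j c; ext a b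
    simp [Matrix.map_apply, Matrix.single, apply_ite (Polynomial.C : ℝ →+* ℝ[X])]
  have mapB : ∀ (i j : Fin (n+2)),
      (1 + SB i j (1:ℝ)).map (Polynomial.C : ℝ → ℝ[X]) = 1 + SB i j (1:ℝ[X]) := by
    intro i j; ext a b
    by_cases h1 : a = b <;> by_cases h2 : i = a ∧ j = b <;>
      simp [Matrix.map_apply, Matrix.add_apply, Matrix.one_apply, Matrix.single,
        h1, h2, map_add]
  have hcm : charmatrix ((1 + SB (0 : Fin (n+2)) (1 : Fin (n+2)) (1:ℝ))ᵀ * M *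
        (1 + SB (0 : Fin (n+2)) (1 : Fin (n+2)) (1:ℝ)))
      = (1 + SB (1 : Fin (n+2)) (0 : Fin (n+2)) (1:ℝ[X])) * (charmatrix M - TT n)
        * (1 + SB (0 : Fin (n+2)) (1 : Fin (n+2)) (1:ℝ[X])) := by
    rw [transB]
    unfold charmatrix
    rw [RingHom.mapMatrix_apply, RingHom.mapMatrix_apply,
      Matrix.map_mul (f := (Polynomial.C : ℝ →+* ℝ[X])),
      Matrix.map_mul (f := (Polynomial.C : ℝ →+* ℝ[X])), mapB, mapB]
    have expand : (1 + SB (1 : Fin (n+2)) (0 : Fin (n+2)) (1:ℝ[X])) *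
        (Matrix.scalar (Fin (n+2)) (X:ℝ[X]) - M.map (Polynomial.C : ℝ → ℝ[X]) - TT n)
        * (1 + SB (0 : Fin (n+2)) (1 : Fin (n+2)) (1:ℝ[X]))
        = (1 + SB (1 : Fin (n+2)) (0 : Fin (n+2)) (1:ℝ[X])) *
          (Matrix.scalar (Fin (n+2)) (X:ℝ[X]) - TT n)
          * (1 + SB (0 : Fin (n+2)) (1 : Fin (n+2)) (1:ℝ[X]))
          - (1 + SB (1 : Fin (n+2)) (0 : Fin (n+2)) (1:ℝ[X])) *
            (M.map (Polynomial.C : ℝ → ℝ[X]))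
            * (1 + SB (0 : Fin (n+2)) (1 : Fin (n+2)) (1:ℝ[X])) := by
      noncomm_ring
    have hss : Matrix.scalar (Fin (n+2)) (X:ℝ[X]) - M.map (Polynomial.C : ℝ → ℝ[X]) - TT n
        = Matrix.scalar (Fin (n+2)) (X:ℝ[X]) - TT n - M.map (Polynomial.C : ℝ → ℝ[X]) := by
      abel
    rw [hss] at expand
    rw [hss, expand, key_alg]
  rw [Matrix.charpoly, hcm, Matrix.det_mul, Matrix.det_mul]
  rw [show (1 + SB (1 : Fin (n+2)) (0 : Fin (n+2)) (1:ℝ[X]))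
      = Matrix.transvection 1 0 (1:ℝ[X]) from rfl,
    show (1 + SB (0 : Fin (n+2)) (1 : Fin (n+2)) (1:ℝ[X]))
      = Matrix.transvection 0 1 (1:ℝ[X]) from rfl,
    Matrix.det_transvection_of_ne _ _ h10' _, Matrix.det_transvection_of_ne _ _ h01' _]
  ring

/-- matrix `N` with entries `(0,1) ↦ p`, `(1,0) ↦ q`, `(1,1) ↦ r` -/
noncomputable def Mp (N : Matrix (Fin (n+2)) (Fin (n+2)) ℝ[X]) (p q r : ℝ[X]) :
    Matrix (Fin (n+2)) (Fin (n+2)) ℝ[X] :=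
  updateCol (updateCol N 0 (Function.update (fun i => N i 0) 1 q)) 1
    (Function.update (Function.update (fun i => N i 1) 0 p) 1 r)

lemma swap_cols (N : Matrix (Fin (n+2)) (Fin (n+2)) ℝ[X]) (x y : Fin (n+2) → ℝ[X]) :
    updateCol (updateCol N 0 x) 1 y = updateCol (updateCol N 1 y) 0 x := by
  ext i j
  by_cases hj0 : j = 0 <;> by_cases hj1 : j = 1 <;>
    simp_all [Matrix.updateCol_apply, h01'.symm]

noncomputable def Dfun (N : Matrix (Fin (n+2)) (Fin (n+2)) ℝ[X])
    (x y : Fin (n+2) → ℝ[X]) : ℝ[X] :=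
  (updateCol (updateCol N 1 y) 0 x).det

lemma Dfun_lin1 (N : Matrix (Fin (n+2)) (Fin (n+2)) ℝ[X]) (x y1 y2) :
    Dfun N x (y1 + y2) = Dfun N x y1 + Dfun N x y2 := by
  simp only [Dfun, ← swap_cols, Matrix.det_updateCol_add]

lemma Dfun_smul1 (N : Matrix (Fin (n+2)) (Fin (n+2)) ℝ[X]) (x s y) :
    Dfun N x (s • y) = s * Dfun N x y := by
  simp only [Dfun, ← swap_cols, Matrix.det_updateCol_smul]

lemma Dfun_lin0 (N : Matrix (Fin (n+2)) (Fin (n+2)) ℝ[X]) (x1 x2 y) :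
    Dfun N (x1 + x2) y = Dfun N x1 y + Dfun N x2 y := by
  simp only [Dfun, Matrix.det_updateCol_add]

lemma Dfun_smul0 (N : Matrix (Fin (n+2)) (Fin (n+2)) ℝ[X]) (s x y) :
    Dfun N (s • x) y = s * Dfun N x y := by
  simp only [Dfun, Matrix.det_updateCol_smul]

lemma Dfun_ee (N : Matrix (Fin (n+2)) (Fin (n+2)) ℝ[X]) :
    Dfun N (Pi.single 1 1) (Pi.single 1 1) = 0 := by
  apply Matrix.det_zero_of_column_eq h01'
  intro k
  simp [Matrix.updateCol_apply, h01'.symm]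

lemma det_Mp (N : Matrix (Fin (n+2)) (Fin (n+2)) ℝ[X]) :
    ∃ a b c d e : ℝ[X], ∀ p q r : ℝ[X],
      (Mp N p q r).det = a + p * b + q * c + r * d + p * q * e := by
  have hu : ∀ q : ℝ[X], Function.update (fun i => N i 0) 1 q
      = Function.update (fun i => N i 0) 1 0 + q • (Pi.single 1 1 : Fin (n+2) → ℝ[X]) := by
    intro q; funext i
    by_cases h : i = 1 <;>
      simp [Function.update_apply, Pi.single_apply, h]
  have hv : ∀ p r : ℝ[X],
      Function.update (Function.update (fun i => N i 1) 0 p) 1 r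
      = Function.update (Function.update (fun i => N i 1) 0 0) 1 0
        + p • (Pi.single 0 1 : Fin (n+2) → ℝ[X]) + r • (Pi.single 1 1 : Fin (n+2) → ℝ[X]) := by
    intro p r; funext i
    by_cases h1 : i = 1 <;> by_cases h0 : i = 0 <;>
      simp_all [Function.update_apply, Pi.single_apply, h01'.symm]
  refine ⟨Dfun N (Function.update (fun i => N i 0) 1 0)
      (Function.update (Function.update (fun i => N i 1) 0 0) 1 0),
    Dfun N (Function.update (fun i => N i 0) 1 0) (Pi.single 0 1),
    Dfun N (Pi.single 1 1) (Function.update (Function.update (fun i => N i 1) 0 0) 1 0),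
    Dfun N (Function.update (fun i => N i 0) 1 0) (Pi.single 1 1),
    Dfun N (Pi.single 1 1) (Pi.single 0 1), ?_⟩
  intro p q r
  have hkey : (Mp N p q r).det = Dfun N
      (Function.update (fun i => N i 0) 1 0 + q • (Pi.single 1 1 : Fin (n+2) → ℝ[X]))
      (Function.update (Function.update (fun i => N i 1) 0 0) 1 0
        + p • (Pi.single 0 1 : Fin (n+2) → ℝ[X])
        + r • (Pi.single 1 1 : Fin (n+2) → ℝ[X])) := by
    rw [Mp, hu, hv, swap_cols, Dfun]
  rw [hkey, Dfun_lin0, Dfun_smul0, Dfun_lin1, Dfun_lin1, Dfun_smul1, Dfun_smul1,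
    Dfun_lin1, Dfun_lin1, Dfun_smul1, Dfun_smul1, Dfun_ee]
  ring

lemma Mp_self (N : Matrix (Fin (n+2)) (Fin (n+2)) ℝ[X]) {p q r : ℝ[X]}
    (h1 : N 0 1 = p) (h2 : N 1 0 = q) (h3 : N 1 1 = r) :
    Mp N p q r = N := by
  ext i j
  by_cases hj0 : j = 0 <;> by_cases hj1 : j = 1 <;>
    by_cases hi0 : i = 0 <;> by_cases hi1 : i = 1 <;>
    simp_all [Mp, Matrix.updateCol_apply, Function.update_apply, h01'.symm]

lemma Mp_congr (M N : Matrix (Fin (n+2)) (Fin (n+2)) ℝ[X]) (p q r : ℝ[X])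
    (h : ∀ i j, ¬(i = 0 ∧ j = 1) → ¬(i = 1 ∧ j = 0) → M i j = N i j) :
    Mp M p q r = Mp N p q r := by
  ext i j
  by_cases hj0 : j = 0 <;> by_cases hj1 : j = 1 <;>
    by_cases hi0 : i = 0 <;> by_cases hi1 : i = 1 <;>
    simp_all [Mp, Matrix.updateCol_apply, Function.update_apply, h01'.symm]

lemma Mp_sub_TT (N : Matrix (Fin (n+2)) (Fin (n+2)) ℝ[X]) (p q r : ℝ[X]) :
    Mp N p q r - TT n = Mp N (p - X) (q - X) (r + X) := by
  ext i j
  by_cases hj0 : j = 0 <;> by_cases hj1 : j = 1 <;>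
    by_cases hi0 : i = 0 <;> by_cases hi1 : i = 1 <;>
    simp_all [Mp, TT, Matrix.updateCol_apply, Function.update_apply,
      Matrix.sub_apply, Matrix.add_apply, Matrix.single, h01'.symm, sub_eq_add_neg,
      eq_comm]

lemma primeAt_eq (M : Matrix (Fin (n+2)) (Fin (n+2)) ℝ) :
    primeAt M = M - SB 0 1 (M 0 1) - SB 1 0 (M 1 0) := by
  ext i j
  by_cases hj0 : j = 0 <;> by_cases hj1 : j = 1 <;>
    by_cases hi0 : i = 0 <;> by_cases hi1 : i = 1 <;>
    simp_all [primeAt, Matrix.sub_apply, Matrix.single, h01'.symm, eq_comm]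

end FourTermAux

open FourTermAux Polynomial in
/-- The 4-term relation for the characteristic polynomial of antisymmetric matrices:
`χ_A - χ_{A'} = χ_{Ã} - χ_{Ã'}`, where `A'` zeroes out the `(1,2)` and `(2,1)` entries,
`Ã = BᵀAB` with `B` the identity matrix with an extra `1` in position `(1,2)`, and
`Ã'` zeroes out the `(1,2)` and `(2,1)` entries of `Ã`. -/
theorem charpoly_four_term (n : ℕ) (A : Matrix (Fin (n + 2)) (Fin (n + 2)) ℝ)
    (hA : Aᵀ = -A) :
    A.charpoly - (primeAt A).charpoly =
      ((1 + Matrix.single 0 1 (1 : ℝ))ᵀ * A *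
          (1 + Matrix.single 0 1 (1 : ℝ))).charpoly -
        (primeAt ((1 + Matrix.single 0 1 (1 : ℝ))ᵀ * A *
          (1 + Matrix.single 0 1 (1 : ℝ)))).charpoly := by
  have hAf : ∀ i j : Fin (n+2), A j i = -A i j := by
    intro i j
    have := congrFun (congrFun hA i) j
    simpa [Matrix.transpose_apply] using this
  have hA00 : A 0 0 = 0 := by have := hAf 0 0; linarith
  have hA11 : A 1 1 = 0 := by have := hAf 1 1; linarith
  have hA10 : A 1 0 = -A 0 1 := hAf 0 1
  set a : ℝ := A 0 1 with ha
  set N : Matrix (Fin (n+2)) (Fin (n+2)) ℝ[X] := charmatrix A with hN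
  -- entries of charmatrix A
  have hN01 : N 0 1 = -(C a) := by rw [hN, charmatrix_apply_ne _ _ _ h01', ha]
  have hN10 : N 1 0 = C a := by
    rw [hN, charmatrix_apply_ne _ _ _ h10', hA10]; simp
  have hN11 : N 1 1 = X := by rw [hN, charmatrix_apply_eq, hA11]; simp
  -- χ_A
  have e1 : A.charpoly = (Mp N (-(C a)) (C a) X).det := by
    rw [Matrix.charpoly, Mp_self N hN01 hN10 hN11, hN]
  -- χ_{A'}
  have hP : charmatrix (primeAt A) = Mp N 0 0 X := by
    have h1 : charmatrix (primeAt A)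
        = Mp (charmatrix (primeAt A)) 0 0 X := by
      rw [Mp_self] <;>
        simp [charmatrix_apply_ne _ _ _ h01', charmatrix_apply_ne _ _ _ h10',
          charmatrix_apply_eq, primeAt, hA11]
    rw [h1, hN]
    apply Mp_congr
    intro i j hij1 hij2
    by_cases h : i = j
    · subst h; simp [charmatrix_apply_eq, primeAt, hij1, hij2]
    · rw [charmatrix_apply_ne _ _ _ h, charmatrix_apply_ne _ _ _ h]
      simp [primeAt, hij1, hij2]
  have e2 : (primeAt A).charpoly = (Mp N 0 0 X).det := by
    rw [Matrix.charpoly, hP]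
  -- χ_{Ã}
  have e3 : ((1 + Matrix.single (0:Fin (n+2)) (1:Fin (n+2)) (1 : ℝ))ᵀ * A *
      (1 + Matrix.single (0:Fin (n+2)) (1:Fin (n+2)) (1 : ℝ))).charpoly
      = (Mp N (-(C a) - X) (C a - X) (X + X)).det := by
    rw [conjB A, ← hN, ← Mp_sub_TT, Mp_self N hN01 hN10 hN11]
  -- χ_{Ã'} : first, primeAt Ã = Bᵀ (primeAt A) B
  have hB' : (1 + Matrix.single (0 : Fin (n+2)) (1 : Fin (n+2)) (1 : ℝ))ᵀ
      = 1 + Matrix.single (1:Fin (n+2)) (0:Fin (n+2)) (1:ℝ) := transB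
  have ht01 : (((1 + Matrix.single (0:Fin (n+2)) (1:Fin (n+2)) (1 : ℝ))ᵀ * A *
      (1 + Matrix.single (0:Fin (n+2)) (1:Fin (n+2)) (1 : ℝ)) :
        Matrix (Fin (n+2)) (Fin (n+2)) ℝ)) 0 1 = a := by
    rw [hB']
    have expand : (1 + Matrix.single (1 : Fin (n+2)) (0 : Fin (n+2)) (1:ℝ)) * A *
        (1 + Matrix.single (0:Fin (n+2)) (1:Fin (n+2)) (1:ℝ))
        = A + Matrix.single (1:Fin (n+2)) (0:Fin (n+2)) (1:ℝ) * A + A * Matrix.single (0:Fin (n+2)) (1:Fin (n+2)) (1:ℝ)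
          + Matrix.single (1:Fin (n+2)) (0:Fin (n+2)) (1:ℝ) * A * Matrix.single (0:Fin (n+2)) (1:Fin (n+2)) (1:ℝ) := by
      noncomm_ring
    rw [expand]
    simp [Matrix.add_apply, h01', h10', hA00, ha]
  have ht10 : (((1 + Matrix.single (0:Fin (n+2)) (1:Fin (n+2)) (1 : ℝ))ᵀ * A *
      (1 + Matrix.single (0:Fin (n+2)) (1:Fin (n+2)) (1 : ℝ)) :
        Matrix (Fin (n+2)) (Fin (n+2)) ℝ)) 1 0 = -a := by
    rw [hB']
    have expand : (1 + Matrix.single (1 : Fin (n+2)) (0 : Fin (n+2)) (1:ℝ)) * A *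
        (1 + Matrix.single (0:Fin (n+2)) (1:Fin (n+2)) (1:ℝ))
        = A + Matrix.single (1:Fin (n+2)) (0:Fin (n+2)) (1:ℝ) * A + A * Matrix.single (0:Fin (n+2)) (1:Fin (n+2)) (1:ℝ)
          + Matrix.single (1:Fin (n+2)) (0:Fin (n+2)) (1:ℝ) * A * Matrix.single (0:Fin (n+2)) (1:Fin (n+2)) (1:ℝ) := by
      noncomm_ring
    rw [expand]
    simp [Matrix.add_apply, h01', h10', hA00, hA10, ha]
  have hprimeconj : primeAt ((1 + Matrix.single (0:Fin (n+2)) (1:Fin (n+2)) (1 : ℝ))ᵀ * A *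
        (1 + Matrix.single (0:Fin (n+2)) (1:Fin (n+2)) (1 : ℝ)))
      = (1 + Matrix.single (0:Fin (n+2)) (1:Fin (n+2)) (1 : ℝ))ᵀ * (primeAt A) *
        (1 + Matrix.single (0:Fin (n+2)) (1:Fin (n+2)) (1 : ℝ)) := by
    rw [primeAt_eq, primeAt_eq, ht01, ht10, hB']
    have sbneg : ∀ (i j : Fin (n+2)) (c : ℝ),
        Matrix.single i j (-c) = -Matrix.single i j c := by
      intro i j c; ext i' j'
      by_cases h : i = i' ∧ j = j' <;> simp [Matrix.single, h]
    rw [sbneg, hA10, sbneg]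
    have lhsalg : (1 + Matrix.single (1 : Fin (n+2)) (0 : Fin (n+2)) (1:ℝ)) *
        (A - Matrix.single (0:Fin (n+2)) (1:Fin (n+2)) a - Matrix.single (1:Fin (n+2)) (0:Fin (n+2)) (-a)) *
        (1 + Matrix.single (0:Fin (n+2)) (1:Fin (n+2)) (1:ℝ))
        = (1 + Matrix.single (1 : Fin (n+2)) (0 : Fin (n+2)) (1:ℝ)) * A *
            (1 + Matrix.single (0:Fin (n+2)) (1:Fin (n+2)) (1:ℝ))
          - (1 + Matrix.single (1 : Fin (n+2)) (0 : Fin (n+2)) (1:ℝ)) *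
            Matrix.single (0:Fin (n+2)) (1:Fin (n+2)) a * (1 + Matrix.single (0:Fin (n+2)) (1:Fin (n+2)) (1:ℝ))
          - (1 + Matrix.single (1 : Fin (n+2)) (0 : Fin (n+2)) (1:ℝ)) *
            Matrix.single (1:Fin (n+2)) (0:Fin (n+2)) (-a) * (1 + Matrix.single (0:Fin (n+2)) (1:Fin (n+2)) (1:ℝ)) := by
      noncomm_ring
    rw [sbneg] at lhsalg
    rw [lhsalg, sub_neg_eq_add]
    have m1 : (1 + Matrix.single (1 : Fin (n+2)) (0 : Fin (n+2)) (1:ℝ)) *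
        Matrix.single (0:Fin (n+2)) (1:Fin (n+2)) a * (1 + Matrix.single (0:Fin (n+2)) (1:Fin (n+2)) (1:ℝ))
        = Matrix.single (0:Fin (n+2)) (1:Fin (n+2)) a + Matrix.single (1:Fin (n+2)) (1:Fin (n+2)) a := by
      simp [mul_add, add_mul, Matrix.single_mul_single_same,
        Matrix.single_mul_single_of_ne, h01', h10']
    have m2 : (1 + Matrix.single (1 : Fin (n+2)) (0 : Fin (n+2)) (1:ℝ)) *
        Matrix.single (1:Fin (n+2)) (0:Fin (n+2)) a * (1 + Matrix.single (0:Fin (n+2)) (1:Fin (n+2)) (1:ℝ))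
        = Matrix.single (1:Fin (n+2)) (0:Fin (n+2)) a + Matrix.single (1:Fin (n+2)) (1:Fin (n+2)) a := by
      simp [mul_add, add_mul, Matrix.single_mul_single_same,
        Matrix.single_mul_single_of_ne, h01', h10']
    simp only [mul_neg, neg_mul, sub_neg_eq_add] at *
    rw [m1, m2]
    abel
  have e4 : (primeAt ((1 + Matrix.single (0:Fin (n+2)) (1:Fin (n+2)) (1 : ℝ))ᵀ * A *
        (1 + Matrix.single (0:Fin (n+2)) (1:Fin (n+2)) (1 : ℝ)))).charpoly
      = (Mp N (0 - X) (0 - X) (X + X)).det := by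
    rw [hprimeconj, conjB, hP, Mp_sub_TT]
  obtain ⟨ca, cb, cc, cd, ce, hf⟩ := det_Mp N
  rw [e1, e2, e3, e4, hf, hf, hf, hf]
  ring
end

section
/- Nondegeneracy of graphs satisfies the 2-term relation: for any simple graph G and distinct vertices a, b, the graph G̃_{ab} obtained from G by toggling the adjacency of a with every neighbor of b (other than a) has the same nondegeneracy as G: ν(G) = ν(G̃_{ab}). -/
open Polynomial
open scoped Classical

/-- Adjacency matrix of a simple graph over `GF(2)`. -/
noncomputable def adjMat {V : Type*} [Fintype V] (G : SimpleGraph V) :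
    Matrix V V (ZMod 2) :=
  Matrix.of fun i j => if G.Adj i j then 1 else 0

/-- Nondegeneracy of a graph: `1` if the adjacency matrix over `GF(2)` is nonsingular,
`0` otherwise. -/
noncomputable def nu {V : Type*} [Fintype V] (G : SimpleGraph V) : ℕ :=
  if IsUnit (adjMat G).det then 1 else 0

/-- The skew characteristic polynomial of a simple graph:
`Q_G(u) = ∑_{U ⊆ V} ν(G[U]) u^{|V| - |U|}`. -/
noncomputable def skewQ {V : Type*} [Fintype V] (G : SimpleGraph V) : Polynomial ℤ :=
  ∑ U : Finset V, (nu (G.induce (U : Set V)) : ℤ) • X ^ (Fintype.card V - U.card)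

/-- The second Vassiliev move `G ↦ G̃_{ab}`: for every vertex `c ∉ {a, b}` adjacent to `b`,
toggle the adjacency between `c` and `a`; all other adjacencies are unchanged. -/
def toggleGraph {V : Type*} (G : SimpleGraph V) (a b : V) : SimpleGraph V where
  Adj x y := Xor'
    ((x = a ∧ y ≠ a ∧ y ≠ b ∧ G.Adj b y) ∨ (y = a ∧ x ≠ a ∧ x ≠ b ∧ G.Adj b x))
    (G.Adj x y)
  symm := by
    constructor
    intro x y h
    unfold Xor' Xor at h ⊢
    rw [G.adj_comm y x]
    tauto
  loopless := by
    constructor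
    intro x h
    unfold Xor' Xor at h
    have := G.irrefl (v := x)
    tauto

lemma adjMat_toggle {V : Type*} [Fintype V] (G : SimpleGraph V) (a b : V) (hab : a ≠ b) :
    adjMat (toggleGraph G a b) =
      Matrix.transvection a b (1 : ZMod 2) * adjMat G * Matrix.transvection b a 1 := by
  ext x y
  rw [Matrix.mul_assoc]
  by_cases hx : x = a <;> by_cases hy : y = a
  · rw [hx, hy, Matrix.transvection_mul_apply_same, Matrix.mul_transvection_apply_same,
      Matrix.mul_transvection_apply_same]
    simp only [adjMat, toggleGraph, Matrix.of_apply, one_mul]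
    have h3 : G.Adj a b ↔ G.Adj b a := G.adj_comm a b
    by_cases h : G.Adj a b <;>
      simp [Xor', h, h3.mp, h3.not.mp, G.irrefl, hab] <;> decide
  · rw [hx, Matrix.transvection_mul_apply_same,
      Matrix.mul_transvection_apply_of_ne _ _ _ _ hy,
      Matrix.mul_transvection_apply_of_ne _ _ _ _ hy]
    simp only [adjMat, toggleGraph, Matrix.of_apply, one_mul]
    have hy' : ¬ a = y := fun h => hy h.symm
    by_cases hyb : y = b
    · simp [Xor', hyb, G.irrefl, hab, hy, hy', Ne.symm hab]
    · by_cases h1 : G.Adj a y <;> by_cases h2 : G.Adj b y <;>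
        simp [Xor', h1, h2, hy, hy', hyb, hab] <;> decide
  · rw [hy, Matrix.transvection_mul_apply_of_ne _ _ _ _ hx,
      Matrix.mul_transvection_apply_same]
    simp only [adjMat, toggleGraph, Matrix.of_apply, one_mul]
    have hx' : ¬ a = x := fun h => hx h.symm
    have hc : G.Adj x b ↔ G.Adj b x := G.adj_comm x b
    by_cases hxb : x = b
    · simp [Xor', hxb, G.irrefl, hab, hx, hx', Ne.symm hab, G.adj_comm]
    · by_cases h1 : G.Adj x a <;> by_cases h2 : G.Adj b x <;>
        simp [Xor', h1, h2, hx, hx', hxb, hab, hc] <;> decide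
  · rw [Matrix.transvection_mul_apply_of_ne _ _ _ _ hx,
      Matrix.mul_transvection_apply_of_ne _ _ _ _ hy]
    simp [adjMat, toggleGraph, Xor', hx, hy]

/-- Nondegeneracy satisfies the 2-term relation: the second Vassiliev move preserves the
nondegeneracy of a graph. -/
theorem nu_toggleGraph {V : Type*} [Fintype V] (G : SimpleGraph V) (a b : V) (hab : a ≠ b) :
    nu (toggleGraph G a b) = nu G := by
  unfold nu
  rw [adjMat_toggle G a b hab, Matrix.det_mul, Matrix.det_mul,
    Matrix.det_transvection_of_ne a b hab, Matrix.det_transvection_of_ne b a hab.symm,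
    one_mul, mul_one]
end
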